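/- Let E ⊆ ℝ with λ(E) = 0, let a < b with E ⊆ (a,b), and let n ≥ 1. Then there exists an open set U with E ⊆ U ⊆ (a,b) such that U is n-small on (a,b). -/

import Mathlib

/-!
Cut `(a, b)` at the points `a + (b - a) / 2 ^ j`, `b - (b - a) / 2 ^ j` into closed blocks.
Cover `E` by open sets of small measure inside the open blocks, and the block endpoints
(which may lie in `E`) by balls so small that each closed block meets the cover in less than
its target measure `|block| / 4 ^ n`. Then top each block up with an interval `(l, l + s)`
at its left end: `s ↦ λ (S ∪ (l, l + s))` is `1`-Lipschitz, so the intermediate value theorem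
gives an `s` hitting the target exactly.
-/

open Set Filter MeasureTheory Topology
open scoped ENNReal NNReal

/-- `M_f(x,r) = sup { |f(x)-f(y)|/r : |x-y| ≤ r }`, valued in `[0,∞]`. -/
noncomputable def Mf (f : ℝ → ℝ) (x r : ℝ) : ℝ≥0∞ :=
  ⨆ y ∈ {y : ℝ | |x - y| ≤ r}, ENNReal.ofReal (|f x - f y| / r)

/-- The big Lip function: `Lip f(x) = limsup_{r→0⁺} M_f(x,r)`. -/
noncomputable def bigLip (f : ℝ → ℝ) (x : ℝ) : ℝ≥0∞ :=
  Filter.limsup (fun r => Mf f x r) (𝓝[>] (0 : ℝ))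

/-- The little lip function: `lip f(x) = liminf_{r→0⁺} M_f(x,r)`. -/
noncomputable def litLip (f : ℝ → ℝ) (x : ℝ) : ℝ≥0∞ :=
  Filter.liminf (fun r => Mf f x r) (𝓝[>] (0 : ℝ))

/-- A set `E ⊆ ℝ` is trim if `λ(E ∩ (a,b)) < b - a` for every open interval `(a,b)`. -/
def Trim (E : Set ℝ) : Prop :=
  ∀ a b : ℝ, a < b → volume (E ∩ Ioo a b) < ENNReal.ofReal (b - a)

/-- An open set `U` is `n`-small on `(a,b)`: for every `j ≥ 1`, the parts of `U` in the
`j`-th dyadic blocks at either end of `(a,b)` have measure exactly `(b-a)/2^{2n+j+1}`. -/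
def NSmall (U : Set ℝ) (n : ℕ) (a b : ℝ) : Prop :=
  ∀ j : ℕ, 1 ≤ j →
    volume (U ∩ Icc (a + (b - a) / 2 ^ (j + 1)) (a + (b - a) / 2 ^ j)) =
      ENNReal.ofReal ((b - a) / 2 ^ (2 * n + j + 1)) ∧
    volume (U ∩ Icc (b - (b - a) / 2 ^ j) (b - (b - a) / 2 ^ (j + 1))) =
      ENNReal.ofReal ((b - a) / 2 ^ (2 * n + j + 1))

open Metric

lemma exists_isOpen_between_measure_lt {α : Type*} [MeasurableSpace α] [TopologicalSpace α]
    {μ : Measure α} [μ.OuterRegular] {S G : Set α} {ε : ℝ≥0∞} (hS : μ S < ε) (hG : IsOpen G)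
    (hSG : S ⊆ G) : ∃ W, IsOpen W ∧ S ⊆ W ∧ W ⊆ G ∧ μ W < ε := by
  obtain ⟨W, hSW, hWo, hWε⟩ := S.exists_isOpen_lt_of_lt ε hS
  exact ⟨W ∩ G, hWo.inter hG, subset_inter hSW hSG, inter_subset_right,
    (measure_mono inter_subset_left).trans_lt hWε⟩

lemma volume_union_Ioo_le_add (S : Set ℝ) (l s s' : ℝ) :
    volume (S ∪ Ioo l (l + s')) ≤ volume (S ∪ Ioo l (l + s)) + ENNReal.ofReal (s' - s) := by
  calc volume (S ∪ Ioo l (l + s'))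
      ≤ volume ((S ∪ Ioo l (l + s)) ∪ Ico (l + s) (l + s')) := by
        rw [union_assoc]
        exact measure_mono (union_subset_union_right S Ioo_subset_Ioo_union_Ico)
    _ ≤ volume (S ∪ Ioo l (l + s)) + volume (Ico (l + s) (l + s')) := measure_union_le _ _
    _ = volume (S ∪ Ioo l (l + s)) + ENNReal.ofReal (s' - s) := by
        rw [Real.volume_Ico, add_sub_add_left_eq_sub]

lemma exists_volume_union_Ioo_eq {S : Set ℝ} {c : ℝ} (hS : volume S < ENNReal.ofReal c) (l : ℝ) :
    ∃ s ∈ Icc 0 c, volume (S ∪ Ioo l (l + s)) = ENNReal.ofReal c := by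
  have hc : 0 < c := ENNReal.ofReal_pos.mp (pos_of_gt hS)
  have hfin : ∀ s, volume (S ∪ Ioo l (l + s)) ≠ ∞ := fun s =>
    (measure_union_lt_top (hS.trans ENNReal.ofReal_lt_top) measure_Ioo_lt_top).ne
  set f : ℝ → ℝ := fun s => (volume (S ∪ Ioo l (l + s))).toReal
  have hf : LipschitzWith 1 f := by
    refine LipschitzWith.of_le_add fun s' s => ?_
    calc f s' ≤ f s + (ENNReal.ofReal (s' - s)).toReal := by
          rw [← ENNReal.toReal_add (hfin s) ENNReal.ofReal_ne_top]
          exact ENNReal.toReal_mono (ENNReal.add_ne_top.2 ⟨hfin s, ENNReal.ofReal_ne_top⟩)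
            (volume_union_Ioo_le_add S l s s')
      _ ≤ f s + dist s' s := by
          rw [ENNReal.toReal_ofReal', Real.dist_eq]
          gcongr
          exact max_le (le_abs_self _) (abs_nonneg _)
  have hf0 : f 0 ≤ c := by
    simpa [f] using ENNReal.toReal_le_of_le_ofReal hc.le hS.le
  have hfc : c ≤ f c := by
    refine (ENNReal.ofReal_le_iff_le_toReal (hfin c)).mp ?_
    calc ENNReal.ofReal c = volume (Ioo l (l + c)) := by rw [Real.volume_Ioo, add_sub_cancel_left]
      _ ≤ _ := measure_mono subset_union_right
  obtain ⟨s, hs, hfs⟩ := intermediate_value_Icc hc.le hf.continuous.continuousOn ⟨hf0, hfc⟩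
  exact ⟨s, hs, by rw [← ENNReal.ofReal_toReal (hfin s)]; exact congrArg ENNReal.ofReal hfs⟩

lemma exists_div_two_pow_lt {L ε : ℝ} (hL : 0 < L) (hε : 0 < ε) : ∃ j : ℕ, L / 2 ^ j < ε := by
  obtain ⟨j, hj⟩ := exists_pow_lt_of_lt_one (div_pos hε hL) (one_half_lt_one (α := ℝ))
  refine ⟨j, ?_⟩
  calc L / 2 ^ j = L * (1 / 2) ^ j := by rw [one_div_pow, mul_one_div]
    _ < L * (ε / L) := by gcongr
    _ = ε := mul_div_cancel₀ ε hL.ne'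

lemma volume_union_ball_union_ball_lt {W : Set ℝ} {c r r' x x' : ℝ}
    (hW : volume W < ENNReal.ofReal (c / 4)) (hr₀ : 0 ≤ r) (hr : r ≤ c / 8) (hr'₀ : 0 ≤ r')
    (hr' : r' ≤ c / 8) : volume (W ∪ ball x r ∪ ball x' r') < ENNReal.ofReal c := by
  have hc : 0 < c := by linarith [ENNReal.ofReal_pos.mp (pos_of_gt hW)]
  calc volume (W ∪ ball x r ∪ ball x' r')
      ≤ volume W + volume (ball x r) + volume (ball x' r') :=
        (measure_union_le _ _).trans (add_le_add_left (measure_union_le _ _) _)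
    _ < ENNReal.ofReal (c / 4) + ENNReal.ofReal (2 * r) + ENNReal.ofReal (2 * r') := by
        rw [Real.volume_ball, Real.volume_ball]
        exact ENNReal.add_lt_add_right ENNReal.ofReal_ne_top
          (ENNReal.add_lt_add_right ENNReal.ofReal_ne_top hW)
    _ = ENNReal.ofReal (c / 4 + 2 * r + 2 * r') := by
        rw [ENNReal.ofReal_add, ENNReal.ofReal_add] <;> linarith
    _ < ENNReal.ofReal c := (ENNReal.ofReal_lt_ofReal_iff hc).mpr (by linarith)

namespace Monotone

variable {t : ℤ → ℝ}

lemma exists_mem_Ico (ht : Monotone t) {x : ℝ} (hlo : ∃ i, t i ≤ x) (hhi : ∃ j, x < t j) :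
    ∃ k, x ∈ Ico (t k) (t (k + 1)) := by
  obtain ⟨j, hj⟩ := hhi
  obtain ⟨k, hk, hmax⟩ := Int.exists_greatest_of_bdd
    ⟨j, fun z (hz : t z ≤ x) => not_lt.mp fun hjz => (hz.trans_lt hj).not_ge (ht hjz.le)⟩ hlo
  exact ⟨k, hk, not_le.mp fun h => (hmax (k + 1) h).not_gt (lt_add_one k)⟩

end Monotone

namespace StrictMono

variable {t : ℤ → ℝ}

lemma eq_of_mem_Ioo_of_mem_Icc (ht : StrictMono t) {i k : ℤ} {x : ℝ}
    (hi : x ∈ Ioo (t i) (t (i + 1))) (hk : x ∈ Icc (t k) (t (k + 1))) : i = k := by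
  have := ht.lt_iff_lt.mp (hk.1.trans_lt hi.2)
  have := ht.lt_iff_lt.mp (hi.1.trans_le hk.2)
  omega

lemma eq_or_eq_add_one_of_mem_Ioo_of_mem_Icc (ht : StrictMono t) {i k : ℤ} {x : ℝ}
    (hi : x ∈ Ioo (t (i - 1)) (t (i + 1))) (hk : x ∈ Icc (t k) (t (k + 1))) :
    i = k ∨ i = k + 1 := by
  have := ht.lt_iff_lt.mp (hk.1.trans_lt hi.2)
  have := ht.lt_iff_lt.mp (hi.1.trans_le hk.2)
  omega

lemma iUnion_union_ball_inter_Icc_subset (ht : StrictMono t) {W : ℤ → Set ℝ}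
    (hW : ∀ k, W k ⊆ Ioo (t k) (t (k + 1))) {r : ℤ → ℝ}
    (hr : ∀ k, ball (t k) (r k) ⊆ Ioo (t (k - 1)) (t (k + 1))) (k : ℤ) :
    (⋃ i, W i ∪ ball (t i) (r i)) ∩ Icc (t k) (t (k + 1)) ⊆
      W k ∪ ball (t k) (r k) ∪ ball (t (k + 1)) (r (k + 1)) := by
  rintro x ⟨hx, hxk⟩
  obtain ⟨i, hxW | hxr⟩ := mem_iUnion.mp hx
  · obtain rfl := ht.eq_of_mem_Ioo_of_mem_Icc (hW i hxW) hxk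
    exact Or.inl (Or.inl hxW)
  · rcases ht.eq_or_eq_add_one_of_mem_Ioo_of_mem_Icc (hr i hxr) hxk with rfl | rfl
    · exact Or.inl (Or.inr hxr)
    · exact Or.inr hxr

lemma exists_isOpen_volume_inter_Icc_lt (ht : StrictMono t) {E : Set ℝ} (hE : volume E = 0)
    (hEt : E ⊆ ⋃ k, Icc (t k) (t (k + 1))) {c : ℤ → ℝ} (hc : ∀ k, 0 < c k)
    (hct : ∀ k, c k ≤ t (k + 1) - t k) :
    ∃ V, IsOpen V ∧ E ⊆ V ∧ V ⊆ ⋃ k, Icc (t k) (t (k + 1)) ∧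
      ∀ k, volume (V ∩ Icc (t k) (t (k + 1))) < ENNReal.ofReal (c k) := by
  have hW (k : ℤ) : ∃ W, IsOpen W ∧ E ∩ Ioo (t k) (t (k + 1)) ⊆ W ∧
      W ⊆ Ioo (t k) (t (k + 1)) ∧ volume W < ENNReal.ofReal (c k / 4) :=
    exists_isOpen_between_measure_lt
      (by rw [measure_mono_null inter_subset_left hE]; simpa using hc k) isOpen_Ioo
      inter_subset_right
  choose W hWo hEW hWt hWc using hW
  -- the ball around `t k` meets the blocks `k - 1` and `k`, so both targets bound its radius
  set r : ℤ → ℝ := fun k => min (c (k - 1)) (c k) / 8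
  have hr (k : ℤ) : 0 < r k := by have := hc k; have := hc (k - 1); positivity
  have hrc (k : ℤ) : r k ≤ c (k - 1) / 8 ∧ r k ≤ c k / 8 :=
    ⟨div_le_div_of_nonneg_right (min_le_left _ _) (by norm_num),
      div_le_div_of_nonneg_right (min_le_right _ _) (by norm_num)⟩
  have hball (k : ℤ) : ball (t k) (r k) ⊆ Ioo (t (k - 1)) (t (k + 1)) := by
    have h := hct (k - 1)
    rw [sub_add_cancel] at h
    have := hct k; have := hrc k; have := hc k; have := hc (k - 1)
    rw [Real.ball_eq_Ioo]
    exact Ioo_subset_Ioo (by linarith) (by linarith)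
  refine ⟨⋃ k, W k ∪ ball (t k) (r k), isOpen_iUnion fun k => (hWo k).union isOpen_ball,
    fun x hx => ?_, iUnion_subset fun k => union_subset ?_ ?_, fun k => ?_⟩
  · obtain ⟨k, hxk⟩ := mem_iUnion.mp (hEt hx)
    rcases hxk.1.eq_or_lt with rfl | hkx
    · exact mem_iUnion_of_mem k (Or.inr (mem_ball_self (hr k)))
    rcases hxk.2.eq_or_lt with rfl | hxk'
    · exact mem_iUnion_of_mem (k + 1) (Or.inr (mem_ball_self (hr (k + 1))))
    exact mem_iUnion_of_mem k (Or.inl (hEW k ⟨hx, hkx, hxk'⟩))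
  · exact (hWt k).trans (Ioo_subset_Icc_self.trans (subset_iUnion_of_subset k subset_rfl))
  · intro x hx
    obtain ⟨h1, h2⟩ := hball k hx
    rcases le_total x (t k) with hxk | hxk
    · exact mem_iUnion_of_mem (k - 1) ⟨h1.le, by rwa [sub_add_cancel]⟩
    · exact mem_iUnion_of_mem k ⟨hxk, h2.le⟩
  · have h := (hrc (k + 1)).1
    rw [add_sub_cancel_right] at h
    exact (measure_mono (ht.iUnion_union_ball_inter_Icc_subset hWt hball k)).trans_lt
      (volume_union_ball_union_ball_lt (hWc k) (hr k).le (hrc k).2 (hr (k + 1)).le h)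

lemma exists_isOpen_superset_volume_inter_Icc_eq (ht : StrictMono t) {V : Set ℝ} (hV : IsOpen V)
    {c : ℤ → ℝ} (hct : ∀ k, c k ≤ t (k + 1) - t k)
    (hVc : ∀ k, volume (V ∩ Icc (t k) (t (k + 1))) < ENNReal.ofReal (c k)) :
    ∃ U, IsOpen U ∧ V ⊆ U ∧ U ⊆ V ∪ ⋃ k, Ioo (t k) (t (k + 1)) ∧
      ∀ k, volume (U ∩ Icc (t k) (t (k + 1))) = ENNReal.ofReal (c k) := by
  choose s hs hsc using fun k => exists_volume_union_Ioo_eq (hVc k) (t k)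
  have hst (k : ℤ) : Ioo (t k) (t k + s k) ⊆ Ioo (t k) (t (k + 1)) :=
    Ioo_subset_Ioo_right (by linarith [(hs k).2, hct k])
  refine ⟨V ∪ ⋃ k, Ioo (t k) (t k + s k), hV.union (isOpen_iUnion fun _ => isOpen_Ioo),
    subset_union_left, union_subset_union_right V (iUnion_mono hst), fun k => ?_⟩
  suffices (⋃ i, Ioo (t i) (t i + s i)) ∩ Icc (t k) (t (k + 1)) = Ioo (t k) (t k + s k) by
    rw [union_inter_distrib_right, this, hsc k]
  refine subset_antisymm (fun x ⟨hx, hxk⟩ => ?_)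
    (subset_inter (subset_iUnion_of_subset k subset_rfl) ((hst k).trans Ioo_subset_Icc_self))
  obtain ⟨i, hxi⟩ := mem_iUnion.mp hx
  obtain rfl := ht.eq_of_mem_Ioo_of_mem_Icc (hst i hxi) hxk
  exact hxi

theorem exists_isOpen_volume_inter_Icc_eq (ht : StrictMono t) {E : Set ℝ} (hE : volume E = 0)
    (hEt : E ⊆ ⋃ k, Icc (t k) (t (k + 1))) {c : ℤ → ℝ} (hc : ∀ k, 0 < c k)
    (hct : ∀ k, c k ≤ t (k + 1) - t k) :
    ∃ U, IsOpen U ∧ E ⊆ U ∧ U ⊆ ⋃ k, Icc (t k) (t (k + 1)) ∧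
      ∀ k, volume (U ∩ Icc (t k) (t (k + 1))) = ENNReal.ofReal (c k) := by
  obtain ⟨V, hVo, hEV, hVt, hVc⟩ := ht.exists_isOpen_volume_inter_Icc_lt hE hEt hc hct
  obtain ⟨U, hUo, hVU, hUV, hUc⟩ := ht.exists_isOpen_superset_volume_inter_Icc_eq hVo hct hVc
  refine ⟨U, hUo, hEV.trans hVU, hUV.trans (union_subset hVt ?_), hUc⟩
  exact iUnion_mono fun k => Ioo_subset_Icc_self

end StrictMono

/-- The points `a + (b - a) / 2 ^ j` and `b - (b - a) / 2 ^ j`, `j ≥ 1`, in increasing order: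
the `j`-th left block of `NSmall` is `[t (-j), t (-j + 1)]` and the `j`-th right block is
`[t (j - 1), t j]`. -/
noncomputable def dyadicPoint (a b : ℝ) : ℤ → ℝ
  | (j : ℕ) => b - (b - a) / 2 ^ (j + 1)
  | .negSucc j => a + (b - a) / 2 ^ (j + 2)

section dyadicPoint

variable {a b : ℝ}

lemma dyadicPoint_negSucc_add_one (j : ℕ) :
    dyadicPoint a b (.negSucc j + 1) = a + (b - a) / 2 ^ (j + 1) := by
  cases j with
  | zero => show b - (b - a) / 2 ^ 1 = _; ring
  | succ j => rfl

lemma dyadicPoint_natCast_add_one (j : ℕ) :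
    dyadicPoint a b (j + 1) = b - (b - a) / 2 ^ (j + 2) := rfl

lemma dyadicPoint_add_one_sub_negSucc (j : ℕ) :
    dyadicPoint a b (.negSucc j + 1) - dyadicPoint a b (.negSucc j) = (b - a) / 2 ^ (j + 2) := by
  rw [dyadicPoint_negSucc_add_one]
  show a + (b - a) / 2 ^ (j + 1) - (a + (b - a) / 2 ^ (j + 2)) = _
  ring

lemma dyadicPoint_add_one_sub_natCast (j : ℕ) :
    dyadicPoint a b (j + 1) - dyadicPoint a b j = (b - a) / 2 ^ (j + 2) := by
  rw [dyadicPoint_natCast_add_one]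
  show b - (b - a) / 2 ^ (j + 2) - (b - (b - a) / 2 ^ (j + 1)) = _
  ring

lemma dyadicPoint_strictMono (hab : a < b) : StrictMono (dyadicPoint a b) := by
  refine strictMono_int_of_lt_succ fun k => sub_pos.mp ?_
  cases k with
  | ofNat j => rw [Int.ofNat_eq_natCast, dyadicPoint_add_one_sub_natCast]; positivity
  | negSucc j => rw [dyadicPoint_add_one_sub_negSucc]; positivity

lemma dyadicPoint_mem_Ioo (hab : a < b) (k : ℤ) : dyadicPoint a b k ∈ Ioo a b := by
  have hL : 0 < b - a := sub_pos.mpr hab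
  have h (j : ℕ) : (b - a) / 2 ^ (j + 1) ∈ Ioo 0 (b - a) :=
    ⟨by positivity, div_lt_self hL (one_lt_pow₀ one_lt_two j.succ_ne_zero)⟩
  cases k with
  | ofNat j =>
    show a < b - (b - a) / 2 ^ (j + 1) ∧ b - (b - a) / 2 ^ (j + 1) < b
    obtain ⟨h0, h1⟩ := h j
    constructor <;> linarith
  | negSucc j =>
    show a < a + (b - a) / 2 ^ (j + 1 + 1) ∧ a + (b - a) / 2 ^ (j + 1 + 1) < b
    obtain ⟨h0, h1⟩ := h (j + 1)
    constructor <;> linarith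

lemma iUnion_Icc_dyadicPoint (hab : a < b) :
    ⋃ k, Icc (dyadicPoint a b k) (dyadicPoint a b (k + 1)) = Ioo a b := by
  refine subset_antisymm (iUnion_subset fun k =>
    Icc_subset_Ioo (dyadicPoint_mem_Ioo hab k).1 (dyadicPoint_mem_Ioo hab (k + 1)).2) ?_
  rintro x ⟨hax, hxb⟩
  have hL : 0 < b - a := sub_pos.mpr hab
  have hle (i m : ℕ) : (b - a) / 2 ^ (i + m) ≤ (b - a) / 2 ^ i :=
    div_le_div_of_nonneg_left hL.le (by positivity) (pow_le_pow_right₀ one_le_two (by omega))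
  obtain ⟨i, hi⟩ := exists_div_two_pow_lt hL (sub_pos.mpr hax)
  obtain ⟨j, hj⟩ := exists_div_two_pow_lt hL (sub_pos.mpr hxb)
  have hix : dyadicPoint a b (.negSucc i) ≤ x := by
    show a + (b - a) / 2 ^ (i + 2) ≤ x
    linarith [hle i 2]
  have hxj : x < dyadicPoint a b j := by
    show x < b - (b - a) / 2 ^ (j + 1)
    linarith [hle j 1]
  obtain ⟨k, hk⟩ := (dyadicPoint_strictMono hab).monotone.exists_mem_Ico ⟨_, hix⟩ ⟨_, hxj⟩
  exact mem_iUnion_of_mem k (Ico_subset_Icc_self hk)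

end dyadicPoint

theorem exists_nsmall_superset_general (E : Set ℝ) (hE : volume E = 0)
    (a b : ℝ) (hab : a < b) (hEab : E ⊆ Ioo a b) (n : ℕ) :
    ∃ U : Set ℝ, IsOpen U ∧ E ⊆ U ∧ U ⊆ Ioo a b ∧ NSmall U n a b := by
  have ht := dyadicPoint_strictMono hab
  rw [← iUnion_Icc_dyadicPoint hab] at hEab ⊢
  obtain ⟨U, hUo, hEU, hUt, hU⟩ := ht.exists_isOpen_volume_inter_Icc_eq hE hEab
    (c := fun k => (dyadicPoint a b (k + 1) - dyadicPoint a b k) / 2 ^ (2 * n))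
    (fun k => div_pos (sub_pos.mpr (ht (lt_add_one k))) (by positivity))
    (fun k => div_le_self (sub_nonneg.mpr (ht.monotone (lt_add_one k).le)) (one_le_pow₀ one_le_two))
  refine ⟨U, hUo, hEU, hUt, fun j hj => ?_⟩
  obtain ⟨i, rfl⟩ := Nat.exists_eq_add_of_le' hj
  have hc : (b - a) / 2 ^ (i + 2) / 2 ^ (2 * n) = (b - a) / 2 ^ (2 * n + (i + 1) + 1) := by
    rw [div_div, ← pow_add]; ring_nf
  constructor
  · have := hU (.negSucc i)
    rwa [dyadicPoint_add_one_sub_negSucc, hc, dyadicPoint_negSucc_add_one] at this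
  · have := hU i
    rwa [dyadicPoint_add_one_sub_natCast, hc, dyadicPoint_natCast_add_one] at this

/-- Every measure-zero set `E ⊆ (a,b)` is contained in an open `U ⊆ (a,b)` that is
`n`-small on `(a,b)`. -/
theorem exists_nsmall_superset (E : Set ℝ) (hE : volume E = 0)
    (a b : ℝ) (hab : a < b) (hEab : E ⊆ Ioo a b) (n : ℕ) (hn : 1 ≤ n) :
    ∃ U : Set ℝ, IsOpen U ∧ E ⊆ U ∧ U ⊆ Ioo a b ∧ NSmall U n a b :=
  exists_nsmall_superset_general E hE a b hab hEab n
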